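/- arXiv:1610.03880 — 5 statements merged into one kernel-verified Lean document; each statement's English description precedes it below -/
import Mathlib

section
/- An ordered hypersemigroup H is regular if and only if for every right ideal A and every left ideal B of H one has A ∩ B = (A*B]. Moreover this is equivalent to: A ∩ B ⊆ (A*B] for every right ideal A and left ideal B. -/
variable {H : Type*}

/-- Subset product induced by a hyperoperation. -/
def hprod (m : H → H → Set H) (A B : Set H) : Set H :=
  ⋃ a ∈ A, ⋃ b ∈ B, m a b

/-- Downward closure (X]. -/
def dcl [LE H] (X : Set H) : Set H := {t | ∃ x ∈ X, t ≤ x}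

/-- Right ideal of an ordered hypergroupoid. -/
def IsRightIdeal [LE H] (m : H → H → Set H) (A : Set H) : Prop :=
  A.Nonempty ∧ hprod m A Set.univ ⊆ A ∧ dcl A = A

/-- Left ideal of an ordered hypergroupoid. -/
def IsLeftIdeal [LE H] (m : H → H → Set H) (A : Set H) : Prop :=
  A.Nonempty ∧ hprod m Set.univ A ⊆ A ∧ dcl A = A

/-- (Two-sided) ideal of an ordered hypergroupoid. -/
def IsIdeal [LE H] (m : H → H → Set H) (A : Set H) : Prop :=
  A.Nonempty ∧ hprod m A Set.univ ⊆ A ∧ hprod m Set.univ A ⊆ A ∧ dcl A = A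

lemma mem_hprod' {m : H → H → Set H} {A B : Set H} {t : H} :
    t ∈ hprod m A B ↔ ∃ a ∈ A, ∃ b ∈ B, t ∈ m a b := by
  simp [hprod]

lemma hprod_mono' {m : H → H → Set H} {A A' B B' : Set H} (hA : A ⊆ A') (hB : B ⊆ B') :
    hprod m A B ⊆ hprod m A' B' := by
  intro t ht
  rw [mem_hprod'] at ht ⊢
  obtain ⟨a, ha, b, hb, h⟩ := ht
  exact ⟨a, hA ha, b, hB hb, h⟩

lemma dcl_mono' [Preorder H] {A B : Set H} (h : A ⊆ B) : dcl A ⊆ dcl B := by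
  rintro t ⟨x, hx, hle⟩; exact ⟨x, h hx, hle⟩

lemma subset_dcl' [Preorder H] {A : Set H} : A ⊆ dcl A :=
  fun t ht => ⟨t, ht, le_refl t⟩

lemma dcl_dcl' [Preorder H] {A : Set H} : dcl (dcl A) = dcl A := by
  apply subset_antisymm _ subset_dcl'
  rintro t ⟨x, ⟨y, hy, hxy⟩, htx⟩
  exact ⟨y, hy, le_trans htx hxy⟩

section main

variable [PartialOrder H] {m : H → H → Set H}
  (hcomp : ∀ a b c : H, a ≤ b →
      dcl (m a c) ⊆ dcl (m b c) ∧ dcl (m c a) ⊆ dcl (m c b))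

include hcomp in
lemma m_compat {x x' y y' t : H} (hx : x ≤ x') (hy : y ≤ y') (ht : t ∈ m x y) :
    t ∈ dcl (m x' y') :=
  (hcomp y y' x' hy).2 ((hcomp x x' y hx).1 (subset_dcl' ht))

include hcomp in
lemma reg_to_eq
    (hreg : ∀ a : H, a ∈ dcl (hprod m (hprod m {a} Set.univ) {a}))
    (A B : Set H) (hA : IsRightIdeal m A) (hB : IsLeftIdeal m B) :
    A ∩ B = dcl (hprod m A B) := by
  obtain ⟨-, hAr, hAd⟩ := hA
  obtain ⟨-, hBl, hBd⟩ := hB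
  apply subset_antisymm
  · rintro a ⟨haA, haB⟩
    obtain ⟨s, hs, has⟩ := hreg a
    rw [mem_hprod'] at hs
    obtain ⟨x, hx, b, hb, hsm⟩ := hs
    rw [mem_hprod'] at hx
    obtain ⟨a', ha', h, -, hxm⟩ := hx
    rw [Set.mem_singleton_iff] at ha' hb
    rw [ha'] at hxm; rw [hb] at hsm
    have hxA : x ∈ A := hAr (mem_hprod'.2 ⟨a, haA, h, trivial, hxm⟩)
    exact ⟨s, mem_hprod'.2 ⟨x, hxA, a, haB, hsm⟩, has⟩
  · rintro t ⟨s, hs, hts⟩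
    rw [mem_hprod'] at hs
    obtain ⟨x, hx, y, hy, hsm⟩ := hs
    constructor
    · rw [← hAd]
      exact ⟨s, hAr (mem_hprod'.2 ⟨x, hx, y, trivial, hsm⟩), hts⟩
    · rw [← hBd]
      exact ⟨s, hBl (mem_hprod'.2 ⟨x, trivial, y, hy, hsm⟩), hts⟩

include hcomp in
lemma sub_to_reg
    (hassoc : ∀ A B C : Set H,
      hprod m (hprod m A B) C = hprod m A (hprod m B C))
    (hsub : ∀ A B : Set H, IsRightIdeal m A → IsLeftIdeal m B →
        A ∩ B ⊆ dcl (hprod m A B)) :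
    ∀ a : H, a ∈ dcl (hprod m (hprod m {a} Set.univ) {a}) := by
  intro a
  set T : Set H := hprod m (hprod m {a} Set.univ) {a} with hT
  set Ra : Set H := dcl ({a} ∪ hprod m {a} Set.univ) with hRa
  set La : Set H := dcl ({a} ∪ hprod m Set.univ {a}) with hLa
  have haRa : a ∈ Ra := subset_dcl' (Or.inl rfl)
  have haLa : a ∈ La := subset_dcl' (Or.inl rfl)
  have hRight : IsRightIdeal m Ra := by
    refine ⟨⟨a, haRa⟩, ?_, dcl_dcl'⟩
    intro t ht
    rw [mem_hprod'] at ht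
    obtain ⟨x, hx, h, -, htm⟩ := ht
    obtain ⟨x', hx', hxx'⟩ := hx
    have : t ∈ dcl (m x' h) := m_compat hcomp hxx' (le_refl h) htm
    obtain ⟨u, hu, htu⟩ := this
    rcases hx' with hx' | hx'
    · rcases hx' with rfl
      exact ⟨u, Or.inr (mem_hprod'.2 ⟨x', rfl, h, trivial, hu⟩), htu⟩
    · -- x' ∈ aH, so m x' h ⊆ aHH ⊆ aH
      have : u ∈ hprod m (hprod m {a} Set.univ) Set.univ :=
        mem_hprod'.2 ⟨x', hx', h, trivial, hu⟩
      rw [hassoc] at this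
      have hu' : u ∈ hprod m {a} Set.univ :=
        hprod_mono' (le_refl {a}) (Set.subset_univ _) this
      exact ⟨u, Or.inr hu', htu⟩
  have hLeft : IsLeftIdeal m La := by
    refine ⟨⟨a, haLa⟩, ?_, dcl_dcl'⟩
    intro t ht
    rw [mem_hprod'] at ht
    obtain ⟨h, -, y, hy, htm⟩ := ht
    obtain ⟨y', hy', hyy'⟩ := hy
    have : t ∈ dcl (m h y') := m_compat hcomp (le_refl h) hyy' htm
    obtain ⟨u, hu, htu⟩ := this
    rcases hy' with hy' | hy'
    · rcases hy' with rfl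
      exact ⟨u, Or.inr (mem_hprod'.2 ⟨h, trivial, y', rfl, hu⟩), htu⟩
    · have : u ∈ hprod m Set.univ (hprod m Set.univ {a}) :=
        mem_hprod'.2 ⟨h, trivial, y', hy', hu⟩
      rw [← hassoc] at this
      have hu' : u ∈ hprod m Set.univ {a} :=
        hprod_mono' (Set.subset_univ _) (le_refl _) this
      exact ⟨u, Or.inr hu', htu⟩
  obtain ⟨s, hs, has⟩ := hsub Ra La hRight hLeft ⟨haRa, haLa⟩
  rw [mem_hprod'] at hs
  obtain ⟨x, hx, y, hy, hsm⟩ := hs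
  obtain ⟨x', hx', hxx'⟩ := hx
  obtain ⟨y', hy', hyy'⟩ := hy
  obtain ⟨u, hu, hsu⟩ := m_compat hcomp hxx' hyy' hsm
  have hau : a ≤ u := le_trans has hsu
  -- helper: membership facts
  have haH : ∀ {z w : H}, z ∈ m a w → z ∈ hprod m {a} Set.univ :=
    fun hz => mem_hprod'.2 ⟨a, rfl, _, trivial, hz⟩
  rcases hx' with hx' | hx' <;> rcases hy' with hy' | hy'
  · -- u ∈ m a a
    rw [Set.mem_singleton_iff] at hx' hy'
    rw [hx', hy'] at hu
    -- a ∈ dcl (m a a) ⊆ dcl (m u a), and m u a ⊆ T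
    have ha' : a ∈ dcl (m a a) := ⟨u, hu, hau⟩
    have ha'' : a ∈ dcl (m u a) := (hcomp a u a hau).1 ha'
    obtain ⟨v, hv, hav⟩ := ha''
    refine ⟨v, ?_, hav⟩
    exact mem_hprod'.2 ⟨u, haH hu, a, rfl, hv⟩
  · -- x' = a, y' ∈ Ha : u ∈ m a y' ⊆ a(Ha) = (aH)a = T
    rw [Set.mem_singleton_iff] at hx'
    rw [hx'] at hu
    have : u ∈ hprod m {a} (hprod m Set.univ {a}) :=
      mem_hprod'.2 ⟨a, rfl, y', hy', hu⟩
    rw [← hassoc] at this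
    exact ⟨u, this, hau⟩
  · -- x' ∈ aH, y' = a : u ∈ m x' a ⊆ T
    rw [Set.mem_singleton_iff] at hy'
    rw [hy'] at hu
    exact ⟨u, mem_hprod'.2 ⟨x', hx', a, rfl, hu⟩, hau⟩
  · -- x' ∈ aH, y' ∈ Ha
    have h1 : u ∈ hprod m (hprod m {a} Set.univ) (hprod m Set.univ {a}) :=
      mem_hprod'.2 ⟨x', hx', y', hy', hu⟩
    rw [hassoc] at h1
    have h2 : hprod m Set.univ (hprod m Set.univ {a}) ⊆ hprod m Set.univ {a} := by
      rw [← hassoc]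
      exact hprod_mono' (Set.subset_univ _) (le_refl _)
    have h3 : u ∈ hprod m {a} (hprod m Set.univ {a}) :=
      hprod_mono' (le_refl _) h2 h1
    rw [← hassoc] at h3
    exact ⟨u, h3, hau⟩

end main

theorem stmt3 [PartialOrder H] (m : H → H → Set H)
    (hne : ∀ a b : H, (m a b).Nonempty)
    (hcomp : ∀ a b c : H, a ≤ b →
      dcl (m a c) ⊆ dcl (m b c) ∧ dcl (m c a) ⊆ dcl (m c b))
    (hassoc : ∀ A B C : Set H,
      hprod m (hprod m A B) C = hprod m A (hprod m B C)) :
    ((∀ a : H, a ∈ dcl (hprod m (hprod m {a} Set.univ) {a})) ↔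
      (∀ A B : Set H, IsRightIdeal m A → IsLeftIdeal m B →
        A ∩ B = dcl (hprod m A B))) ∧
    ((∀ a : H, a ∈ dcl (hprod m (hprod m {a} Set.univ) {a})) ↔
      (∀ A B : Set H, IsRightIdeal m A → IsLeftIdeal m B →
        A ∩ B ⊆ dcl (hprod m A B))) := by
  constructor
  · constructor
    · exact fun hreg A B hA hB => reg_to_eq hcomp hreg A B hA hB
    · intro heq
      exact sub_to_reg hcomp hassoc (fun A B hA hB => (heq A B hA hB).le)
  · constructor
    · intro hreg A B hA hB
      exact (reg_to_eq hcomp hreg A B hA hB).le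
    · exact fun hsub => sub_to_reg hcomp hassoc hsub
end

section
/- Let H be an ordered hypergroupoid. The ideals of H are idempotent (A = (A*A] for every ideal A) if and only if for any two ideals A and B of H one has A ∩ B = (A*B]. -/
variable {H : Type*}

theorem stmt9 [PartialOrder H] (m : H → H → Set H)
    (hne : ∀ a b : H, (m a b).Nonempty)
    (hcomp : ∀ a b c : H, a ≤ b →
      dcl (m a c) ⊆ dcl (m b c) ∧ dcl (m c a) ⊆ dcl (m c b)) :
    (∀ A : Set H, IsIdeal m A → A = dcl (hprod m A A)) ↔
    (∀ A B : Set H, IsIdeal m A → IsIdeal m B → A ∩ B = dcl (hprod m A B)) := by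
  have hmem : ∀ (A B : Set H) (x : H), x ∈ hprod m A B ↔ ∃ a ∈ A, ∃ b ∈ B, x ∈ m a b := by
    intro A B x; simp [hprod]
  have hpm : ∀ (A B C D : Set H), A ⊆ C → B ⊆ D → hprod m A B ⊆ hprod m C D := by
    intro A B C D hAC hBD x hx
    obtain ⟨a, ha, b, hb, hm⟩ := (hmem A B x).1 hx
    exact (hmem C D x).2 ⟨a, hAC ha, b, hBD hb, hm⟩
  have hdm : ∀ (X Y : Set H), X ⊆ Y → dcl X ⊆ dcl Y := by
    rintro X Y hXY x ⟨y, hy, hle⟩; exact ⟨y, hXY hy, hle⟩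
  constructor
  · intro hid A B hA hB
    obtain ⟨hAne, hAr, hAl, hAd⟩ := hA
    obtain ⟨hBne, hBr, hBl, hBd⟩ := hB
    -- A*B ⊆ A ∩ B
    have hsub : hprod m A B ⊆ A ∩ B := fun x hx => by
      obtain ⟨a, ha, b, hb, hm⟩ := (hmem A B x).1 hx
      exact ⟨hAr ((hmem A Set.univ x).2 ⟨a, ha, b, trivial, hm⟩),
        hBl ((hmem Set.univ B x).2 ⟨a, trivial, b, hb, hm⟩)⟩
    have hABdcl : dcl (A ∩ B) = A ∩ B := by
      apply Set.Subset.antisymm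
      · intro x hx
        exact ⟨(hAd ▸ hdm _ _ (Set.inter_subset_left) hx : x ∈ A),
          (hBd ▸ hdm _ _ (Set.inter_subset_right) hx : x ∈ B)⟩
      · intro x hx; exact ⟨x, hx, le_refl x⟩
    have hABne : (A ∩ B).Nonempty := by
      obtain ⟨a, ha⟩ := hAne
      obtain ⟨b, hb⟩ := hBne
      obtain ⟨c, hc⟩ := hne a b
      exact ⟨c, hsub ((hmem A B c).2 ⟨a, ha, b, hb, hc⟩)⟩
    have hABideal : IsIdeal m (A ∩ B) :=
      ⟨hABne,
        fun x hx => ⟨hAr (hpm _ _ _ _ Set.inter_subset_left subset_rfl hx),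
          hBr (hpm _ _ _ _ Set.inter_subset_right subset_rfl hx)⟩,
        fun x hx => ⟨hAl (hpm _ _ _ _ subset_rfl Set.inter_subset_left hx),
          hBl (hpm _ _ _ _ subset_rfl Set.inter_subset_right hx)⟩,
        hABdcl⟩
    apply Set.Subset.antisymm
    · calc A ∩ B = dcl (hprod m (A ∩ B) (A ∩ B)) := hid _ hABideal
        _ ⊆ dcl (hprod m A B) :=
          hdm _ _ (hpm _ _ _ _ Set.inter_subset_left Set.inter_subset_right)
    · calc dcl (hprod m A B) ⊆ dcl (A ∩ B) := hdm _ _ hsub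
        _ = A ∩ B := hABdcl
  · intro h A hA
    have := h A A hA hA
    simpa using this
end

section
/- An hypersemigroup H is regular (a ∈ {a}*H*{a} for every a) if and only if R(a) ∩ L(a) ⊆ R(a)*L(a) for every a ∈ H, where R(a) = {a} ∪ ({a}*H) and L(a) = {a} ∪ (H*{a}) are the principal right and left ideals. -/
variable {H : Type*}

theorem stmt13 (m : H → H → Set H)
    (hne : ∀ a b : H, (m a b).Nonempty)
    (hassoc : ∀ A B C : Set H,
      hprod m (hprod m A B) C = hprod m A (hprod m B C)) :
    (∀ a : H, a ∈ hprod m (hprod m {a} Set.univ) {a}) ↔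
    (∀ a : H,
      ({a} ∪ hprod m {a} Set.univ) ∩ ({a} ∪ hprod m Set.univ {a}) ⊆
        hprod m ({a} ∪ hprod m {a} Set.univ) ({a} ∪ hprod m Set.univ {a})) := by
  have mem_hprod : ∀ (x : H) (A B : Set H),
      x ∈ hprod m A B ↔ ∃ a ∈ A, ∃ b ∈ B, x ∈ m a b := by
    intro x A B; simp [hprod]
  have hmono : ∀ {A A' B B' : Set H}, A ⊆ A' → B ⊆ B' →
      hprod m A B ⊆ hprod m A' B' := by
    intro A A' B B' hA hB x hx
    rw [mem_hprod] at hx ⊢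
    obtain ⟨u, hu, v, hv, h⟩ := hx
    exact ⟨u, hA hu, v, hB hv, h⟩
  constructor
  · intro hreg a x hx
    obtain ⟨hxR, hxL⟩ := hx
    have h1 : x ∈ hprod m {x} (hprod m Set.univ {x}) := by
      rw [← hassoc]; exact hreg x
    refine hmono ?_ ?_ h1
    · intro y hy; rw [Set.mem_singleton_iff] at hy; subst hy; exact hxR
    · -- H*{x} ⊆ L(a)
      rcases hxL with hxa | hxHa
      · rw [Set.mem_singleton_iff] at hxa; subst hxa
        exact fun y hy => Or.inr hy
      · intro y hy
        right
        have : y ∈ hprod m Set.univ (hprod m Set.univ {a}) := by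
          refine hmono (le_refl _) ?_ hy
          intro z hz; rw [Set.mem_singleton_iff] at hz; subst hz; exact hxHa
        rw [← hassoc] at this
        exact hmono (Set.subset_univ _) (le_refl _) this
  · intro h a
    have ha : a ∈ hprod m ({a} ∪ hprod m {a} Set.univ)
        ({a} ∪ hprod m Set.univ {a}) :=
      h a ⟨Or.inl rfl, Or.inl rfl⟩
    rw [mem_hprod] at ha
    obtain ⟨u, hu, v, hv, hmem⟩ := ha
    rcases hu with hu | hu
    · rw [Set.mem_singleton_iff] at hu; rw [hu] at hmem
      rcases hv with hv | hv
      · -- a ∈ m a a : then a ∈ {a}*H and a ∈ m a a ⊆ ({a}*H)*{a}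
        rw [Set.mem_singleton_iff] at hv; rw [hv] at hmem
        have haH : a ∈ hprod m {a} Set.univ := by
          rw [mem_hprod]; exact ⟨a, rfl, a, trivial, hmem⟩
        rw [mem_hprod]; exact ⟨a, haH, a, rfl, hmem⟩
      · -- a ∈ m a v, v ∈ H*{a}
        have : a ∈ hprod m {a} (hprod m Set.univ {a}) := by
          rw [mem_hprod]; exact ⟨a, rfl, v, hv, hmem⟩
        rw [← hassoc] at this
        exact hmono (hmono (le_refl _) (Set.subset_univ _)) (le_refl _) this
    · rcases hv with hv | hv
      · rw [Set.mem_singleton_iff] at hv; rw [hv] at hmem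
        rw [mem_hprod]; exact ⟨u, hu, a, rfl, hmem⟩
      · -- u ∈ {a}*H, v ∈ H*{a}
        have h1 : a ∈ hprod m (hprod m {a} Set.univ) (hprod m Set.univ {a}) := by
          rw [mem_hprod]; exact ⟨u, hu, v, hv, hmem⟩
        rw [← hassoc] at h1
        have h2 : hprod m (hprod m {a} Set.univ) Set.univ ⊆ hprod m {a} Set.univ := by
          rw [hassoc]; exact hmono (le_refl _) (Set.subset_univ _)
        exact hmono h2 (le_refl _) h1
end

section
/- An hypersemigroup H is regular if and only if f ∧ g ⪯ f ∘ g for every fuzzy right ideal f and every fuzzy left ideal g of H, where (f∘g)(a) = sup over pairs (y,z) with a ∈ y∘z of min{f(y), g(z)} (and 0 if no such pair exists). -/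
variable {H : Type*}

/-- Product of fuzzy subsets induced by the hyperoperation
(`sSup ∅ = 0` in `ℝ`, which gives the value 0 when no pair exists). -/
noncomputable def fprod (m : H → H → Set H) (f g : H → ℝ) (a : H) : ℝ :=
  sSup {r : ℝ | ∃ y z : H, a ∈ m y z ∧ r = min (f y) (g z)}

/-- Fuzzy subset: values in [0,1]. -/
def IsFuzzy (f : H → ℝ) : Prop := ∀ x : H, 0 ≤ f x ∧ f x ≤ 1

/-- Fuzzy right ideal. -/
def IsFuzzyRightIdeal (m : H → H → Set H) (f : H → ℝ) : Prop :=
  IsFuzzy f ∧ ∀ x y u : H, u ∈ m x y → f x ≤ f u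

/-- Fuzzy left ideal. -/
def IsFuzzyLeftIdeal (m : H → H → Set H) (f : H → ℝ) : Prop :=
  IsFuzzy f ∧ ∀ x y u : H, u ∈ m x y → f y ≤ f u

lemma mem_hprod_iff (m : H → H → Set H) (A B : Set H) (u : H) :
    u ∈ hprod m A B ↔ ∃ a ∈ A, ∃ b ∈ B, u ∈ m a b := by
  simp [hprod]

/-- absorption on the right for `{a} ∘ H` -/
lemma right_absorb (m : H → H → Set H)
    (hassoc : ∀ A B C : Set H,
      hprod m (hprod m A B) C = hprod m A (hprod m B C))
    {a y v u : H} (hy : y ∈ insert a (hprod m {a} Set.univ))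
    (hu : u ∈ m y v) : u ∈ hprod m {a} Set.univ := by
  rcases hy with hy | hy
  · rw [hy] at hu
    exact (mem_hprod_iff m {a} Set.univ u).2 ⟨a, rfl, v, trivial, hu⟩
  · rcases (mem_hprod_iff m {a} Set.univ y).1 hy with ⟨a', ha', s, -, hys⟩
    rcases ha'
    have : u ∈ hprod m (hprod m {a} {s}) {v} :=
      (mem_hprod_iff m _ _ u).2 ⟨y, (mem_hprod_iff m _ _ y).2 ⟨a, rfl, s, rfl, hys⟩, v, rfl, hu⟩
    rw [hassoc] at this
    rcases (mem_hprod_iff m _ _ u).1 this with ⟨a', ha', w, -, huw⟩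
    rcases ha'
    exact (mem_hprod_iff m _ _ u).2 ⟨a, rfl, w, trivial, huw⟩

/-- absorption on the left for `H ∘ {a}` -/
lemma left_absorb (m : H → H → Set H)
    (hassoc : ∀ A B C : Set H,
      hprod m (hprod m A B) C = hprod m A (hprod m B C))
    {a z v u : H} (hz : z ∈ insert a (hprod m Set.univ {a}))
    (hu : u ∈ m v z) : u ∈ hprod m Set.univ {a} := by
  rcases hz with hz | hz
  · rw [hz] at hu
    exact (mem_hprod_iff m Set.univ {a} u).2 ⟨v, trivial, a, rfl, hu⟩
  · rcases (mem_hprod_iff m Set.univ {a} z).1 hz with ⟨s, -, a', ha', hzs⟩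
    rcases ha'
    have : u ∈ hprod m {v} (hprod m {s} {a}) :=
      (mem_hprod_iff m _ _ u).2 ⟨v, rfl, z, (mem_hprod_iff m _ _ z).2 ⟨s, rfl, a, rfl, hzs⟩, hu⟩
    rw [← hassoc] at this
    rcases (mem_hprod_iff m _ _ u).1 this with ⟨w, -, a', ha', huw⟩
    rcases ha'
    exact (mem_hprod_iff m _ _ u).2 ⟨w, trivial, a, rfl, huw⟩

theorem stmt14 (m : H → H → Set H)
    (hne : ∀ a b : H, (m a b).Nonempty)
    (hassoc : ∀ A B C : Set H,
      hprod m (hprod m A B) C = hprod m A (hprod m B C)) :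
    (∀ a : H, a ∈ hprod m (hprod m {a} Set.univ) {a}) ↔
    (∀ f g : H → ℝ, IsFuzzyRightIdeal m f → IsFuzzyLeftIdeal m g →
      ∀ a : H, min (f a) (g a) ≤ fprod m f g a) := by
  constructor
  · intro hreg f g hf hg a
    rcases (mem_hprod_iff m _ _ a).1 (hreg a) with ⟨x, hx, a', ha', hax⟩
    rcases ha'
    rcases (mem_hprod_iff m _ _ x).1 hx with ⟨a', ha', t, -, hxt⟩
    rcases ha'
    have hbdd : BddAbove {r : ℝ | ∃ y z : H, a ∈ m y z ∧ r = min (f y) (g z)} := by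
      refine ⟨1, fun r hr => ?_⟩
      rcases hr with ⟨y, z, -, rfl⟩
      exact le_trans (min_le_left _ _) (hf.1 y).2
    have hmem : min (f x) (g a) ∈ {r : ℝ | ∃ y z : H, a ∈ m y z ∧ r = min (f y) (g z)} :=
      ⟨x, a, hax, rfl⟩
    calc min (f a) (g a) ≤ min (f x) (g a) :=
          min_le_min (hf.2 a t x hxt) le_rfl
      _ ≤ fprod m f g a := le_csSup hbdd hmem
  · intro hcond a
    classical
    set R : Set H := insert a (hprod m {a} Set.univ) with hR
    set L : Set H := insert a (hprod m Set.univ {a}) with hL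
    set f : H → ℝ := fun x => if x ∈ R then 1 else 0 with hfdef
    set g : H → ℝ := fun x => if x ∈ L then 1 else 0 with hgdef
    have hf : IsFuzzyRightIdeal m f := by
      constructor
      · intro x; simp only [hfdef]; split <;> norm_num
      · intro x y u hu
        simp only [hfdef]
        split
        · next hx =>
          have : u ∈ R := Set.mem_insert_iff.2 (Or.inr (right_absorb m hassoc hx hu))
          simp [this]
        · split <;> norm_num
    have hg : IsFuzzyLeftIdeal m g := by
      constructor
      · intro x; simp only [hgdef]; split <;> norm_num
      · intro x y u hu
        simp only [hgdef]
        split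
        · next hy =>
          have : u ∈ L := Set.mem_insert_iff.2 (Or.inr (left_absorb m hassoc hy hu))
          simp [this]
        · split <;> norm_num
    have h1 : (1 : ℝ) ≤ fprod m f g a := by
      have := hcond f g hf hg a
      have hfa : f a = 1 := by simp [hfdef, hR]
      have hga : g a = 1 := by simp [hgdef, hL]
      rwa [hfa, hga, min_self] at this
    by_contra hnot
    have hzero : ∀ r ∈ {r : ℝ | ∃ y z : H, a ∈ m y z ∧ r = min (f y) (g z)}, r ≤ 0 := by
      rintro r ⟨y, z, hayz, rfl⟩
      by_cases hy : y ∈ R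
      · by_cases hz : z ∈ L
        · exfalso
          apply hnot
          -- a ∈ m y z with y ∈ R, z ∈ L; show a ∈ (a∘H)∘a
          rcases hz with hz | hz
          · -- z = a : need y' ∈ a∘H with a ∈ m y' a
            rw [hz] at hayz
            rcases hy with hy | hy
            · -- y = a : a ∈ m a a
              rw [hy] at hayz
              have hai : a ∈ hprod m {a} Set.univ :=
                (mem_hprod_iff m _ _ a).2 ⟨a, rfl, a, trivial, hayz⟩
              exact (mem_hprod_iff m _ _ a).2 ⟨a, hai, a, rfl, hayz⟩
            · exact (mem_hprod_iff m _ _ a).2 ⟨y, hy, a, rfl, hayz⟩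
          · rcases (mem_hprod_iff m _ _ z).1 hz with ⟨t, -, a', ha', hzt⟩
            rcases ha'
            have : a ∈ hprod m {y} (hprod m {t} {a}) :=
              (mem_hprod_iff m _ _ a).2
                ⟨y, rfl, z, (mem_hprod_iff m _ _ z).2 ⟨t, rfl, a, rfl, hzt⟩, hayz⟩
            rw [← hassoc] at this
            rcases (mem_hprod_iff m _ _ a).1 this with ⟨w, hw, a', ha', haw⟩
            rcases ha'
            rcases (mem_hprod_iff m _ _ w).1 hw with ⟨y', hy', t', -, hwt⟩
            rcases hy'
            have hwR : w ∈ hprod m {a} Set.univ := right_absorb m hassoc hy hwt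
            exact (mem_hprod_iff m _ _ a).2 ⟨w, hwR, a, rfl, haw⟩
        · have : g z = 0 := by simp [hgdef, hz]
          simp [this]
      · have : f y = 0 := by simp [hfdef, hy]
        simp [this]
    have : fprod m f g a ≤ 0 := Real.sSup_le hzero le_rfl
    linarith
end

section
/- Let H be an hypergroupoid and F a nonempty subset of H. Then F is a filter of H if and only if H∖F is empty or H∖F is a prime ideal of H. -/
variable {H : Type*}

theorem stmt19 (m : H → H → Set H)
    (hne : ∀ a b : H, (m a b).Nonempty)
    (F : Set H) (hF : F.Nonempty) :
    ((∀ x y : H, x ∈ F → y ∈ F → m x y ⊆ F) ∧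
     (∀ x y : H, m x y ⊆ F → x ∈ F ∧ y ∈ F) ∧
     (∀ x y : H, m x y ⊆ F ∨ (m x y ∩ F) = ∅)) ↔
    (Fᶜ = (∅ : Set H) ∨
      ((Fᶜ).Nonempty ∧ hprod m Fᶜ Set.univ ⊆ Fᶜ ∧ hprod m Set.univ Fᶜ ⊆ Fᶜ ∧
       (∀ a b : H, m a b ⊆ Fᶜ → a ∈ Fᶜ ∨ b ∈ Fᶜ) ∧
       (∀ a b : H, m a b ⊆ Fᶜ ∨ (m a b ∩ Fᶜ) = ∅))) := by
  constructor
  · rintro ⟨h1, h2, h3⟩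
    by_cases hc : Fᶜ = (∅ : Set H)
    · exact Or.inl hc
    · right
      have key : ∀ a b : H, a ∉ F ∨ b ∉ F → m a b ⊆ Fᶜ := by
        intro a b hab z hz hzF
        rcases h3 a b with h | h
        · rcases h2 a b h with ⟨ha, hb⟩
          rcases hab with h' | h' <;> exact h' ‹_›
        · exact absurd (Set.mem_inter hz hzF) (by simp [h])
      refine ⟨Set.nonempty_iff_ne_empty.mpr hc, ?_, ?_, ?_, ?_⟩
      · intro z hz
        simp only [hprod, Set.mem_iUnion] at hz
        obtain ⟨a, ha, b, _, hz⟩ := hz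
        exact key a b (Or.inl ha) hz
      · intro z hz
        simp only [hprod, Set.mem_iUnion] at hz
        obtain ⟨a, _, b, hb, hz⟩ := hz
        exact key a b (Or.inr hb) hz
      · intro a b hab
        by_contra hcon
        push_neg at hcon
        obtain ⟨ha, hb⟩ := hcon
        simp only [Set.mem_compl_iff, not_not] at ha hb
        obtain ⟨z, hz⟩ := hne a b
        exact hab hz (h1 a b ha hb hz)
      · intro a b
        rcases h3 a b with h | h
        · right
          ext z
          simp only [Set.mem_inter_iff, Set.mem_compl_iff, Set.mem_empty_iff_false, iff_false,
            not_and, not_not]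
          exact fun hz => h hz
        · left
          intro z hz hzF
          exact absurd (Set.mem_inter hz hzF) (by simp [h])
  · rintro (hc | ⟨_, hI1, hI2, hp1, hp2⟩)
    · have hF' : F = Set.univ := by
        rw [← Set.compl_empty, ← hc, compl_compl]
      subst hF'
      refine ⟨fun x y _ _ => Set.subset_univ _, fun x y _ => ⟨trivial, trivial⟩,
        fun x y => Or.inl (Set.subset_univ _)⟩
    · have hmem : ∀ a b z : H, (a ∉ F ∨ b ∉ F) → z ∈ m a b → z ∉ F := by
        intro a b z hab hz
        rcases hab with h | h
        · exact hI1 (by simp only [hprod, Set.mem_iUnion]; exact ⟨a, h, b, trivial, hz⟩)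
        · exact hI2 (by simp only [hprod, Set.mem_iUnion]; exact ⟨a, trivial, b, h, hz⟩)
      refine ⟨?_, ?_, ?_⟩
      · intro x y hx hy z hz
        by_contra hzF
        rcases hp2 x y with h | h
        · rcases hp1 x y h with h' | h' <;> exact h' ‹_›
        · exact absurd (Set.mem_inter hz (Set.mem_compl hzF)) (by simp [h])
      · intro x y hsub
        constructor
        · by_contra hx
          obtain ⟨z, hz⟩ := hne x y
          exact hmem x y z (Or.inl hx) hz (hsub hz)
        · by_contra hy
          obtain ⟨z, hz⟩ := hne x y
          exact hmem x y z (Or.inr hy) hz (hsub hz)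
      · intro x y
        rcases hp2 x y with h | h
        · right
          ext z
          simp only [Set.mem_inter_iff, Set.mem_empty_iff_false, iff_false, not_and]
          exact fun hz => h hz
        · left
          intro z hz
          by_contra hzF
          exact absurd (Set.mem_inter hz (Set.mem_compl hzF)) (by simp [h])
end
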